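/- arXiv:2309.07775 — 3 statements merged into one kernel-verified Lean document; each statement's English description precedes it below -/
import Mathlib

section
/- Let M be a symmetric positive definite 2n×2n real matrix and Ω = {z ∈ ℝ^{2n} : ⟨Mz, z⟩ ≤ ℏ}. Then Ω^{ℏ,σ} = Ω if and only if there exists a linear symplectic automorphism S of ℝ^{2n} such that Ω = S(B^{2n}(√ℏ)); that is, the fixed points of symplectic polar duality among centered ellipsoids are exactly the quantum blobs (symplectic images of the ball of radius √ℏ). -/
open MeasureTheory Real Metric
open scoped RealInnerProductSpace Pointwise

noncomputable section

/-- `ℝⁿ` with its Euclidean structure. -/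
abbrev En (n : ℕ) := EuclideanSpace ℝ (Fin n)

/-- The phase space `ℝ²ⁿ = ℝⁿ × ℝⁿ` with its Euclidean structure, the first block of
coordinates being the positions `x` and the second block the momenta `p`. -/
abbrev PS (n : ℕ) := EuclideanSpace ℝ (Fin n ⊕ Fin n)

/-- The standard symplectic matrix `J = [[0, I], [-I, 0]]`. -/
def Jmat (n : ℕ) : Matrix (Fin n ⊕ Fin n) (Fin n ⊕ Fin n) ℝ :=
  Matrix.fromBlocks 0 1 (-1) 0

/-- The standard symplectic form `σ(z, z') = ⟨Jz, z'⟩`. -/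
def symp (n : ℕ) (z z' : PS n) : ℝ := ⟪(Matrix.toEuclideanLin (Jmat n)) z, z'⟫

/-- The quadratic form `z ↦ ⟨Mz, z⟩`. -/
def qf {m : Type*} [Fintype m] [DecidableEq m] (M : Matrix m m ℝ)
    (z : EuclideanSpace ℝ m) : ℝ := ⟪(Matrix.toEuclideanLin M) z, z⟫

/-- The symplectic `ℏ`-polar dual `Ω^{ℏ,σ} = {z' : ∀ z ∈ Ω, σ(z, z') ≤ ℏ}`. -/
def sympDual (n : ℕ) (ℏ : ℝ) (Ω : Set (PS n)) : Set (PS n) :=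
  {z' | ∀ z ∈ Ω, symp n z z' ≤ ℏ}

/-- A linear automorphism of `ℝ²ⁿ` is symplectic if it preserves the symplectic form. -/
def IsSymplectic {n : ℕ} (S : PS n ≃ₗ[ℝ] PS n) : Prop :=
  ∀ z z', symp n (S z) (S z') = symp n z z'

/-! The ℏ-polar dual of the ellipsoid `{⟨Mz, z⟩ ≤ ℏ}` is `{⟨M⁻¹z, z⟩ ≤ ℏ}`: writing `M = RᵀR`,
this reduces to the self-duality of the ball of radius `√ℏ`. Since `σ(z, z') = ⟨z, Jᵀz'⟩`, the
symplectic dual is the ellipsoid of `J M⁻¹ Jᵀ`, and as an ellipsoid determines its matrix, `Ω` is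
self-dual iff `J M⁻¹ Jᵀ = M`, i.e. iff the symmetric matrix `M` is symplectic. A quantum blob
`S(B(√ℏ))` is the ellipsoid of `AᵀA` with `A = S⁻¹` symplectic; conversely, when `M` is symplectic
so is its positive square root `R`, and `Ω = R⁻¹(B(√ℏ))`. -/

open Matrix
open scoped MatrixOrder

lemma forall_inner_le_iff_norm_le {E : Type*} [NormedAddCommGroup E] [InnerProductSpace ℝ E]
    {r : ℝ} (hr : 0 < r) (u : E) : (∀ a, ‖a‖ ≤ r → ⟪a, u⟫ ≤ r ^ 2) ↔ ‖u‖ ≤ r := by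
  refine ⟨fun h => ?_, fun hu a ha => ?_⟩
  · rcases eq_or_ne u 0 with rfl | hu
    · simpa using hr.le
    have hu' : 0 < ‖u‖ := norm_pos_iff.mpr hu
    have hnorm : ‖(r / ‖u‖) • u‖ ≤ r := by
      rw [norm_smul, Real.norm_of_nonneg (by positivity), div_mul_cancel₀ _ hu'.ne']
    have hinner : ⟪(r / ‖u‖) • u, u⟫ = r * ‖u‖ := by
      rw [real_inner_smul_left, real_inner_self_eq_norm_sq]
      field_simp
    refine le_of_mul_le_mul_left ?_ hr
    rw [← hinner, ← sq]
    exact h _ hnorm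
  · calc ⟪a, u⟫ ≤ ‖a‖ * ‖u‖ := real_inner_le_norm a u
      _ ≤ r * r := mul_le_mul ha hu (norm_nonneg _) hr.le
      _ = r ^ 2 := (sq r).symm

section Ellipsoid

variable {m : Type*} [Fintype m] [DecidableEq m]

lemma inner_toEuclideanLin (A : Matrix m m ℝ) (x y : EuclideanSpace ℝ m) :
    ⟪toEuclideanLin A x, y⟫ = ⟪x, toEuclideanLin Aᵀ y⟫ := by
  rw [← conjTranspose_eq_transpose_of_trivial, toEuclideanLin_conjTranspose_eq_adjoint,
    LinearMap.adjoint_inner_right]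

lemma qf_toEuclideanLin (M B : Matrix m m ℝ) (z : EuclideanSpace ℝ m) :
    qf M (toEuclideanLin B z) = qf (Bᵀ * M * B) z := by
  simp only [qf, toLpLin_mul_same, LinearMap.comp_apply, inner_toEuclideanLin Bᵀ]
  rw [transpose_transpose]

lemma qf_transpose_mul_self (A : Matrix m m ℝ) (z : EuclideanSpace ℝ m) :
    qf (Aᵀ * A) z = ‖toEuclideanLin A z‖ ^ 2 := by
  rw [← Matrix.mul_one Aᵀ, ← qf_toEuclideanLin, qf, toLpLin_one, LinearMap.id_apply,
    real_inner_self_eq_norm_sq]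

lemma qf_transpose_mul_self_le_iff {ℏ : ℝ} (hℏ : 0 ≤ ℏ) (A : Matrix m m ℝ)
    (z : EuclideanSpace ℝ m) : qf (Aᵀ * A) z ≤ ℏ ↔ ‖toEuclideanLin A z‖ ≤ √ℏ := by
  rw [qf_transpose_mul_self, Real.le_sqrt (norm_nonneg _) hℏ]

lemma qf_smul (M : Matrix m m ℝ) (t : ℝ) (z : EuclideanSpace ℝ m) :
    qf M (t • z) = t ^ 2 * qf M z := by
  simp only [qf, map_smul, inner_smul_left, inner_smul_right, RCLike.conj_to_real]
  ring

lemma Matrix.PosDef.qf_pos {M : Matrix m m ℝ} (hM : M.PosDef) {z : EuclideanSpace ℝ m}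
    (hz : z ≠ 0) : 0 < qf M z := by
  have := hM.dotProduct_mulVec_pos (x := z.ofLp) (by simpa using hz)
  simpa [qf, EuclideanSpace.inner_eq_star_dotProduct, dotProduct_comm] using this

lemma qf_le_of_setOf_qf_le_subset {ℏ : ℝ} (hℏ : 0 < ℏ) {M N : Matrix m m ℝ} (hM : M.PosDef)
    (h : {z | qf M z ≤ ℏ} ⊆ {z | qf N z ≤ ℏ}) (z : EuclideanSpace ℝ m) : qf N z ≤ qf M z := by
  rcases eq_or_ne z 0 with rfl | hz
  · simp [qf]
  have ha := hM.qf_pos hz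
  have hscaled : qf M (√(ℏ / qf M z) • z) ≤ ℏ := by
    rw [qf_smul, Real.sq_sqrt (by positivity), div_mul_cancel₀ _ ha.ne']
  have hN := h hscaled
  rw [Set.mem_ofPred_eq, qf_smul, Real.sq_sqrt (by positivity), div_mul_eq_mul_div,
    div_le_iff₀ ha] at hN
  exact le_of_mul_le_mul_left (by linarith) hℏ

lemma eq_of_qf_eq {M N : Matrix m m ℝ} (hM : M.IsHermitian) (hN : N.IsHermitian)
    (h : ∀ z, qf M z = qf N z) : M = N := by
  have hsymm : (toEuclideanLin (M - N)).IsSymmetric :=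
    isSymmetric_toEuclideanLin_iff.mpr (hM.sub hN)
  have hzero : toEuclideanLin (M - N) = 0 := hsymm.inner_map_self_eq_zero.mp fun z => by
    simpa [qf, inner_sub_left, sub_eq_zero] using h z
  exact sub_eq_zero.mp (toEuclideanLin.map_eq_zero_iff.mp hzero)

lemma eq_of_setOf_qf_le_eq {ℏ : ℝ} (hℏ : 0 < ℏ) {M N : Matrix m m ℝ} (hM : M.PosDef)
    (hN : N.PosDef) (h : {z | qf M z ≤ ℏ} = {z | qf N z ≤ ℏ}) : M = N :=
  eq_of_qf_eq hM.isHermitian hN.isHermitian fun z =>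
    le_antisymm (qf_le_of_setOf_qf_le_subset hℏ hN h.ge z)
      (qf_le_of_setOf_qf_le_subset hℏ hM h.le z)

lemma Matrix.PosDef.isUnit_det_sqrt {M : Matrix m m ℝ} (hM : M.PosDef) :
    IsUnit (CFC.sqrt M).det :=
  (isUnit_iff_isUnit_det _).mp (CFC.isUnit_sqrt_iff_isStrictlyPositive.mpr hM.isStrictlyPositive)

lemma Matrix.transpose_sqrt {M : Matrix m m ℝ} : (CFC.sqrt M)ᵀ = CFC.sqrt M := by
  rw [← conjTranspose_eq_transpose_of_trivial]
  exact (CFC.sqrt_nonneg M).posSemidef.isHermitian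

lemma Matrix.PosDef.transpose_sqrt_mul_sqrt {M : Matrix m m ℝ} (hM : M.PosDef) :
    (CFC.sqrt M)ᵀ * CFC.sqrt M = M := by
  rw [transpose_sqrt, CFC.sqrt_mul_sqrt_self M hM.posSemidef.nonneg]

lemma forall_norm_toEuclideanLin_le_imp_inner_le_iff {A : Matrix m m ℝ} (hA : IsUnit A.det)
    {r : ℝ} (hr : 0 < r) (w : EuclideanSpace ℝ m) :
    (∀ z, ‖toEuclideanLin A z‖ ≤ r → ⟪z, w⟫ ≤ r ^ 2) ↔ ‖toEuclideanLin A⁻¹ᵀ w‖ ≤ r := by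
  have hAA : ∀ a, toEuclideanLin A (toEuclideanLin A⁻¹ a) = a := fun a => by
    rw [← LinearMap.comp_apply, ← toLpLin_mul_same, mul_nonsing_inv _ hA, toLpLin_one,
      LinearMap.id_apply]
  have hAA' : ∀ z, toEuclideanLin A⁻¹ (toEuclideanLin A z) = z := fun z => by
    rw [← LinearMap.comp_apply, ← toLpLin_mul_same, nonsing_inv_mul _ hA, toLpLin_one,
      LinearMap.id_apply]
  rw [← forall_inner_le_iff_norm_le hr]
  refine ⟨fun h a ha => ?_, fun h z hz => ?_⟩
  · rw [← inner_toEuclideanLin]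
    exact h _ (by rwa [hAA])
  · have := h _ hz
    rwa [← inner_toEuclideanLin, hAA'] at this

lemma Matrix.PosDef.exists_transpose_mul_self {M : Matrix m m ℝ} (hM : M.PosDef) :
    ∃ R : Matrix m m ℝ, IsUnit R.det ∧ Rᵀ * R = M :=
  ⟨CFC.sqrt M, hM.isUnit_det_sqrt, hM.transpose_sqrt_mul_sqrt⟩

lemma forall_qf_le_imp_inner_le_iff {ℏ : ℝ} (hℏ : 0 < ℏ) {M : Matrix m m ℝ} (hM : M.PosDef)
    (w : EuclideanSpace ℝ m) : (∀ z, qf M z ≤ ℏ → ⟪z, w⟫ ≤ ℏ) ↔ qf M⁻¹ w ≤ ℏ := by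
  obtain ⟨R, hR, rfl⟩ := hM.exists_transpose_mul_self
  have hinv : (Rᵀ * R)⁻¹ = R⁻¹ᵀᵀ * R⁻¹ᵀ := by
    rw [Matrix.mul_inv_rev, transpose_transpose, transpose_nonsing_inv]
  have key := forall_norm_toEuclideanLin_le_imp_inner_le_iff hR (Real.sqrt_pos.mpr hℏ) w
  rw [Real.sq_sqrt hℏ.le] at key
  simpa only [hinv, qf_transpose_mul_self_le_iff hℏ.le] using key

lemma LinearEquiv.image_symm_closedBall_eq_setOf_qf_le {ℏ : ℝ} (hℏ : 0 ≤ ℏ)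
    {T : EuclideanSpace ℝ m ≃ₗ[ℝ] EuclideanSpace ℝ m} {A : Matrix m m ℝ}
    (hA : toEuclideanLin A = T) : T.symm '' closedBall 0 (√ℏ) = {z | qf (Aᵀ * A) z ≤ ℏ} := by
  ext z
  rw [LinearEquiv.image_symm_eq_preimage, Set.mem_preimage, Set.mem_ofPred_eq,
    qf_transpose_mul_self_le_iff hℏ, hA, mem_closedBall_zero_iff]
  rfl

lemma Matrix.posDef_transpose_mul_self {A : Matrix m m ℝ}
    (hA : Function.Injective (toEuclideanLin A)) : (Aᵀ * A).PosDef := by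
  rw [← conjTranspose_eq_transpose_of_trivial]
  exact PosDef.conjTranspose_mul_self _ fun v w h =>
    WithLp.toLp_injective 2 (hA (congrArg (WithLp.toLp 2) h))

end Ellipsoid

section SymplecticGroup

variable {l : Type*} [Fintype l] [DecidableEq l]

lemma J_mul_inv_mul_transpose_eq_self_iff {R : Type*} [CommRing R]
    {M : Matrix (l ⊕ l) (l ⊕ l) R} (hM : M.IsSymm) (hMu : IsUnit M.det) :
    J l R * M⁻¹ * (J l R)ᵀ = M ↔ M ∈ symplecticGroup l R := by
  constructor
  · intro h
    rw [SymplecticGroup.mem_iff, hM.eq]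
    calc M * J l R * M = M * J l R * (J l R * M⁻¹ * (J l R)ᵀ) := by rw [h]
      _ = -(M * (J l R * J l R) * M⁻¹ * J l R) := by
        simp only [J_transpose, Matrix.mul_assoc, Matrix.mul_neg]
      _ = J l R := by simp [J_squared, mul_nonsing_inv _ hMu]
  · intro h
    rw [SymplecticGroup.inv_eq_symplectic_inv M h, hM.eq, J_transpose]
    calc J l R * (-J l R * M * J l R) * -J l R = (J l R * J l R) * M * (J l R * J l R) := by
          simp only [Matrix.mul_assoc, Matrix.mul_neg, Matrix.neg_mul, neg_neg]
      _ = M := by simp [J_squared]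

lemma sqrt_mem_symplecticGroup {M : Matrix (l ⊕ l) (l ⊕ l) ℝ} (hM : M.PosDef)
    (hMS : M ∈ symplecticGroup l ℝ) : CFC.sqrt M ∈ symplecticGroup l ℝ := by
  set R := CFC.sqrt M
  have hRpsd : R.PosSemidef := (CFC.sqrt_nonneg M).posSemidef
  have hRR : R * R = M := CFC.sqrt_mul_sqrt_self M hM.posSemidef.nonneg
  have hJJt : J l ℝ * (J l ℝ)ᵀ = 1 := by simp [J_transpose, J_squared]
  have hMinv : M⁻¹ = (J l ℝ)ᵀ * M * J l ℝ := by
    rw [SymplecticGroup.inv_eq_symplectic_inv M hMS, J_transpose,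
      (isHermitian_iff_isSymm.mp hM.isHermitian).eq]
  -- `Jᵀ R J` and `R⁻¹` are both positive semidefinite square roots of `M⁻¹`
  have hconj : (J l ℝ)ᵀ * R * J l ℝ = R⁻¹ := by
    have hsq : ((J l ℝ)ᵀ * R * J l ℝ) * ((J l ℝ)ᵀ * R * J l ℝ) = M⁻¹ := by
      rw [hMinv, ← hRR]
      simp only [Matrix.mul_assoc]
      rw [← Matrix.mul_assoc (J l ℝ) (J l ℝ)ᵀ, hJJt, Matrix.one_mul]
    have hpsd : ((J l ℝ)ᵀ * R * J l ℝ).PosSemidef := by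
      simpa [conjTranspose_eq_transpose_of_trivial] using
        hRpsd.conjTranspose_mul_mul_same (J l ℝ)
    rw [← CFC.sqrt_unique hsq hpsd.nonneg,
      CFC.sqrt_unique (by rw [← Matrix.mul_inv_rev, hRR]) hRpsd.inv.nonneg]
  rw [SymplecticGroup.mem_iff', transpose_sqrt]
  calc R * J l ℝ * R = J l ℝ * (J l ℝ)ᵀ * R * J l ℝ * R := by rw [hJJt, Matrix.one_mul]
    _ = J l ℝ * ((J l ℝ)ᵀ * R * J l ℝ * R) := by simp only [Matrix.mul_assoc]
    _ = J l ℝ := by rw [hconj, nonsing_inv_mul _ hM.isUnit_det_sqrt, Matrix.mul_one]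

end SymplecticGroup

lemma Jmat_eq_neg_J (n : ℕ) : Jmat n = -J (Fin n) ℝ := by
  simp [Jmat, J, fromBlocks_neg]

lemma Jmat_mul_mul_transpose (n : ℕ) (X : Matrix (Fin n ⊕ Fin n) (Fin n ⊕ Fin n) ℝ) :
    Jmat n * X * (Jmat n)ᵀ = J (Fin n) ℝ * X * (J (Fin n) ℝ)ᵀ := by
  simp [Jmat_eq_neg_J]

section PhaseSpace

variable {n : ℕ}

lemma symp_toEuclideanLin (A : Matrix (Fin n ⊕ Fin n) (Fin n ⊕ Fin n) ℝ) (z z' : PS n) :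
    symp n (toEuclideanLin A z) (toEuclideanLin A z') =
      ⟪toEuclideanLin (Aᵀ * Jmat n * A) z, z'⟫ := by
  rw [symp, real_inner_comm, inner_toEuclideanLin, real_inner_comm]
  simp

lemma isSymplectic_iff_mem_symplecticGroup (S : PS n ≃ₗ[ℝ] PS n) :
    IsSymplectic S ↔ toEuclideanLin.symm (S : PS n →ₗ[ℝ] PS n) ∈ symplecticGroup (Fin n) ℝ := by
  set A := toEuclideanLin.symm (S : PS n →ₗ[ℝ] PS n)
  have hS : ∀ z, S z = toEuclideanLin A z := fun z => by simp [A]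
  have hext : ∀ B C : Matrix (Fin n ⊕ Fin n) (Fin n ⊕ Fin n) ℝ,
      (∀ z z', ⟪toEuclideanLin B z, z'⟫ = ⟪toEuclideanLin C z, z'⟫) ↔ B = C := fun B C =>
    ⟨fun h => toEuclideanLin.injective (LinearMap.ext fun z => ext_inner_right ℝ (h z)),
      fun h _ _ => h ▸ rfl⟩
  simp only [IsSymplectic, hS, symp_toEuclideanLin]
  simp only [symp]
  rw [hext, SymplecticGroup.mem_iff', Jmat_eq_neg_J, Matrix.mul_neg, Matrix.neg_mul, neg_inj]

lemma IsSymplectic.symm {S : PS n ≃ₗ[ℝ] PS n} (hS : IsSymplectic S) : IsSymplectic S.symm :=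
  fun z z' => by rw [← hS, S.apply_symm_apply, S.apply_symm_apply]

lemma sympDual_setOf_qf_le {ℏ : ℝ} (hℏ : 0 < ℏ)
    {M : Matrix (Fin n ⊕ Fin n) (Fin n ⊕ Fin n) ℝ} (hM : M.PosDef) :
    sympDual n ℏ {z | qf M z ≤ ℏ} = {z | qf (Jmat n * M⁻¹ * (Jmat n)ᵀ) z ≤ ℏ} := by
  ext w
  have key := forall_qf_le_imp_inner_le_iff hℏ hM (toEuclideanLin (Jmat n)ᵀ w)
  rw [qf_toEuclideanLin, transpose_transpose] at key
  simpa only [sympDual, symp, inner_toEuclideanLin, Set.mem_ofPred_eq] using key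

lemma exists_isSymplectic_eq_image_closedBall {ℏ : ℝ} (hℏ : 0 ≤ ℏ)
    {M : Matrix (Fin n ⊕ Fin n) (Fin n ⊕ Fin n) ℝ} (hM : M.PosDef)
    (hMS : M ∈ symplecticGroup (Fin n) ℝ) :
    ∃ S : PS n ≃ₗ[ℝ] PS n, IsSymplectic S ∧ {z | qf M z ≤ ℏ} = S '' closedBall 0 (√ℏ) := by
  let T : PS n ≃ₗ[ℝ] PS n :=
    toLinearEquiv (EuclideanSpace.basisFun _ ℝ).toBasis (CFC.sqrt M) hM.isUnit_det_sqrt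
  have hT : toEuclideanLin (CFC.sqrt M) = T := rfl
  refine ⟨T.symm, IsSymplectic.symm ?_, ?_⟩
  · rw [isSymplectic_iff_mem_symplecticGroup, ← hT, LinearEquiv.symm_apply_apply]
    exact sqrt_mem_symplecticGroup hM hMS
  · rw [T.image_symm_closedBall_eq_setOf_qf_le hℏ hT, hM.transpose_sqrt_mul_sqrt]

lemma mem_symplecticGroup_of_eq_image_closedBall {ℏ : ℝ} (hℏ : 0 < ℏ)
    {M : Matrix (Fin n ⊕ Fin n) (Fin n ⊕ Fin n) ℝ} (hM : M.PosDef) {S : PS n ≃ₗ[ℝ] PS n}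
    (hS : IsSymplectic S) (h : {z | qf M z ≤ ℏ} = S '' closedBall 0 (√ℏ)) :
    M ∈ symplecticGroup (Fin n) ℝ := by
  set A := toEuclideanLin.symm (S.symm : PS n →ₗ[ℝ] PS n)
  have hA : toEuclideanLin A = S.symm := LinearEquiv.apply_symm_apply _ _
  have hAS : A ∈ symplecticGroup (Fin n) ℝ :=
    (isSymplectic_iff_mem_symplecticGroup S.symm).mp hS.symm
  have hMA : M = Aᵀ * A := by
    refine eq_of_setOf_qf_le_eq hℏ hM (posDef_transpose_mul_self (hA ▸ S.symm.injective)) ?_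
    rw [h, ← S.symm.image_symm_closedBall_eq_setOf_qf_le hℏ.le hA, LinearEquiv.symm_symm]
  rw [hMA]
  exact mul_mem (SymplecticGroup.transpose_mem hAS) hAS

lemma mem_symplecticGroup_iff_exists_isSymplectic_eq_image_closedBall {ℏ : ℝ} (hℏ : 0 < ℏ)
    {M : Matrix (Fin n ⊕ Fin n) (Fin n ⊕ Fin n) ℝ} (hM : M.PosDef) :
    M ∈ symplecticGroup (Fin n) ℝ ↔
      ∃ S : PS n ≃ₗ[ℝ] PS n, IsSymplectic S ∧ {z | qf M z ≤ ℏ} = S '' closedBall 0 (√ℏ) :=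
  ⟨exists_isSymplectic_eq_image_closedBall hℏ.le hM,
    fun ⟨_, hS, h⟩ => mem_symplecticGroup_of_eq_image_closedBall hℏ hM hS h⟩

lemma sympDual_setOf_qf_le_eq_self_iff {ℏ : ℝ} (hℏ : 0 < ℏ)
    {M : Matrix (Fin n ⊕ Fin n) (Fin n ⊕ Fin n) ℝ} (hM : M.PosDef) :
    sympDual n ℏ {z | qf M z ≤ ℏ} = {z | qf M z ≤ ℏ} ↔ M ∈ symplecticGroup (Fin n) ℝ := by
  have hdual : (J (Fin n) ℝ * M⁻¹ * (J (Fin n) ℝ)ᵀ).PosDef := by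
    rw [← conjTranspose_eq_transpose_of_trivial]
    exact hM.inv.mul_mul_conjTranspose_same <| vecMul_injective_iff_isUnit.mpr <|
      (isUnit_iff_isUnit_det _).mpr (isUnit_det_J (Fin n) ℝ)
  rw [sympDual_setOf_qf_le hℏ hM, Jmat_mul_mul_transpose,
    ← J_mul_inv_mul_transpose_eq_self_iff (isHermitian_iff_isSymm.mp hM.isHermitian)
      ((isUnit_iff_isUnit_det _).mp hM.isUnit)]
  exact ⟨eq_of_setOf_qf_le_eq hℏ hdual hM, fun h => by rw [h]⟩

end PhaseSpace

/-- a centered ellipsoid `Ω = {⟨Mz,z⟩ ≤ ℏ}` is a fixed point of symplectic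
polar duality if and only if it is a quantum blob, i.e. the image `S(B²ⁿ(√ℏ))` of the
ball of radius `√ℏ` by a linear symplectic automorphism `S`. -/
theorem stmt4 (n : ℕ) (ℏ : ℝ) (hℏ : 0 < ℏ)
    (M : Matrix (Fin n ⊕ Fin n) (Fin n ⊕ Fin n) ℝ) (hM : M.PosDef) :
    sympDual n ℏ {z | qf M z ≤ ℏ} = {z | qf M z ≤ ℏ} ↔
      ∃ S : PS n ≃ₗ[ℝ] PS n, IsSymplectic S ∧
        {z | qf M z ≤ ℏ} = ⇑S '' closedBall (0 : PS n) (Real.sqrt ℏ) :=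
  (sympDual_setOf_qf_le_eq_self_iff hℏ hM).trans
    (mem_symplecticGroup_iff_exists_isSymplectic_eq_image_closedBall hℏ hM)
end
end

section
/- Let Σ be a symmetric positive definite 2n×2n real matrix such that the complex Hermitian matrix Σ + (iℏ/2)J is positive semidefinite. Then the covariance ellipsoid Ω = {z ∈ ℝ^{2n} : ⟨Σ⁻¹z, z⟩ ≤ 2} satisfies Ω^{ℏ,σ} ⊆ Ω, and consequently there exists a linear symplectic automorphism S of ℝ^{2n} with S(B^{2n}(√ℏ)) ⊆ Ω (Ω is quantum admissible). -/
/-!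
Evaluating the Hermitian form of `Σ + (iℏ/2)J ⪰ 0` at `Ju + i(ℏ/2)Σ⁻¹u` gives the real
uncertainty inequality `(ℏ/2)² ⟨Σ⁻¹u, u⟩ ≤ ⟨ΣJu, Ju⟩`. The support function of
`Ω = {⟨Σ⁻¹z, z⟩ ≤ 2}` is `y ↦ √(2⟨Σy, y⟩)` and `σ(z, z') = -⟨z, Jz'⟩`, so every `z'` in the
symplectic polar dual satisfies `2⟨ΣJz', Jz'⟩ ≤ ℏ²`, hence `⟨Σ⁻¹z', z'⟩ ≤ 2`.

For the quantum blob, let `A = √Σ`, `K = AJA` (skew-symmetric, invertible) and `P = A|K|⁻¹A`.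
Since `|K|` commutes with `K` and `|K|² = -K²`, `P` is symplectic, and the uncertainty inequality
says `|K| ≥ ℏ/2`, i.e. `(ℏ/2)P ≤ Σ`. The square root `S = √P` is again symplectic, and
`(ℏ/2)SSᵀ ≤ Σ` inverts to `SᵀΣ⁻¹S ≤ 2/ℏ`, so `S` maps `B²ⁿ(√ℏ)` into `Ω`.
-/

open MeasureTheory Real Metric
open scoped RealInnerProductSpace Pointwise

noncomputable section

open scoped ComplexOrder

namespace Matrix

section DotProduct

variable {m R : Type*} [Fintype m]

theorem mulVec_dotProduct_mulVec [CommSemiring R] (A B : Matrix m m R) (x y : m → R) :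
    (A *ᵥ x) ⬝ᵥ (B *ᵥ y) = x ⬝ᵥ (Aᵀ * B) *ᵥ y := by
  rw [← mulVec_mulVec, dotProduct_transpose_mulVec, dotProduct_comm]

variable [CommRing R] [LinearOrder R] [IsStrictOrderedRing R]

theorem dotProduct_self_nonneg (x : m → R) : 0 ≤ x ⬝ᵥ x :=
  Finset.sum_nonneg fun i _ => mul_self_nonneg (x i)

theorem sq_dotProduct_le_mul (x y : m → R) : (x ⬝ᵥ y) ^ 2 ≤ (x ⬝ᵥ x) * (y ⬝ᵥ y) := by
  simpa [dotProduct, sq] using Finset.sum_mul_sq_le_sq_mul_sq Finset.univ x y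

end DotProduct

section InverseBounds

variable {m : Type*} [Fintype m] [DecidableEq m]

theorem dotProduct_inv_mulVec_le {R : Matrix m m ℝ} (hR : IsUnit R.det) {c : ℝ} (hc : 0 < c)
    (h : ∀ y, c ^ 2 * (y ⬝ᵥ y) ≤ (R *ᵥ y) ⬝ᵥ (R *ᵥ y)) (v : m → ℝ) :
    v ⬝ᵥ R⁻¹ *ᵥ v ≤ c⁻¹ * (v ⬝ᵥ v) := by
  set y := R⁻¹ *ᵥ v
  have hRy : R *ᵥ y = v := by rw [mulVec_mulVec, mul_nonsing_inv _ hR, one_mulVec]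
  have hy := h y
  rw [hRy] at hy
  have hcs := sq_dotProduct_le_mul v y
  have hvv := dotProduct_self_nonneg v
  have hsq : (c * (v ⬝ᵥ y)) ^ 2 ≤ (v ⬝ᵥ v) ^ 2 := by nlinarith
  rw [le_inv_mul_iff₀ hc]
  exact (abs_le_of_sq_le_sq' hsq hvv).2

/-- Inversion of the Loewner order `c SSᵀ ≤ Σ` into `c SᵀΣ⁻¹S ≤ 1`, by Cauchy–Schwarz. -/
theorem mulVec_dotProduct_inv_mulVec_le {Sig S : Matrix m m ℝ} (hSig : Sig.PosDef) {c : ℝ}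
    (hc : 0 < c) (h : ∀ v, c * ((Sᵀ *ᵥ v) ⬝ᵥ (Sᵀ *ᵥ v)) ≤ v ⬝ᵥ Sig *ᵥ v) (x : m → ℝ) :
    (S *ᵥ x) ⬝ᵥ Sig⁻¹ *ᵥ (S *ᵥ x) ≤ c⁻¹ * (x ⬝ᵥ x) := by
  have hq : 0 ≤ (S *ᵥ x) ⬝ᵥ Sig⁻¹ *ᵥ (S *ᵥ x) := by
    simpa only [star_trivial] using hSig.inv.posSemidef.dotProduct_mulVec_nonneg (S *ᵥ x)
  set w := Sig⁻¹ *ᵥ (S *ᵥ x)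
  set q := (S *ᵥ x) ⬝ᵥ w
  have hqx : q = x ⬝ᵥ Sᵀ *ᵥ w := by rw [dotProduct_transpose_mulVec, dotProduct_comm]
  have hww : w ⬝ᵥ Sig *ᵥ w = q := by
    rw [mulVec_mulVec, mul_nonsing_inv _ ((isUnit_iff_isUnit_det Sig).mp hSig.isUnit), one_mulVec,
      dotProduct_comm]
  have hcs := sq_dotProduct_le_mul x (Sᵀ *ᵥ w)
  have hw := h w
  rw [hww] at hw
  rw [← hqx] at hcs
  rw [le_inv_mul_iff₀ hc]
  rcases hq.eq_or_lt with hq0 | hqpos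
  · rw [← hq0, mul_zero]
    exact dotProduct_self_nonneg x
  · nlinarith [dotProduct_self_nonneg x]

end InverseBounds

section UncertaintyPrinciple

variable {m : Type*} [Fintype m] {J : Matrix m m ℝ}

theorem transpose_mul_self_eq_one [DecidableEq m] (hJ : Jᵀ = -J) (hJJ : J * J = -1) :
    Jᵀ * J = 1 := by
  rw [hJ, Matrix.neg_mul, hJJ, neg_neg]

theorem isUnit_det_of_mul_self_eq_neg_one [DecidableEq m] (hJJ : J * J = -1) : IsUnit J.det :=
  isUnit_det_of_right_inverse (B := -J) (by rw [Matrix.mul_neg, hJJ, neg_neg])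

theorem dotProduct_mulVec_swap (hJ : Jᵀ = -J) (x y : m → ℝ) :
    y ⬝ᵥ J *ᵥ x = -(x ⬝ᵥ J *ᵥ y) := by
  rw [← dotProduct_transpose_mulVec, hJ, neg_mulVec, dotProduct_neg]

/-- The real part of the Hermitian form of `Σ + itJ` at `z + iw`. -/
theorem mul_sub_le_of_posSemidef_add_I_smul {Sig : Matrix m m ℝ} {t : ℝ}
    (h : (Sig.map (fun a => (a : ℂ)) +
      (Complex.I * Complex.ofReal t) • J.map (fun a => (a : ℂ))).PosSemidef)
    (z w : m → ℝ) :
    t * (z ⬝ᵥ J *ᵥ w - w ⬝ᵥ J *ᵥ z) ≤ z ⬝ᵥ Sig *ᵥ z + w ⬝ᵥ Sig *ᵥ w := by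
  have hre := (Complex.le_def.mp
    (h.dotProduct_mulVec_nonneg fun i => (z i : ℂ) + Complex.I * (w i : ℂ))).1
  have key : (star (fun i => (z i : ℂ) + Complex.I * (w i : ℂ)) ⬝ᵥ
      (Sig.map (fun a => (a : ℂ)) + (Complex.I * Complex.ofReal t) • J.map (fun a => (a : ℂ))) *ᵥ
        fun i => (z i : ℂ) + Complex.I * (w i : ℂ)).re
      = z ⬝ᵥ Sig *ᵥ z + w ⬝ᵥ Sig *ᵥ w - t * (z ⬝ᵥ J *ᵥ w - w ⬝ᵥ J *ᵥ z) := by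
    simp only [dotProduct, mulVec, Pi.star_apply, Matrix.add_apply, Matrix.smul_apply, map_apply,
      smul_eq_mul, Finset.mul_sum, Complex.re_sum, ← Finset.sum_sub_distrib,
      ← Finset.sum_add_distrib]
    refine Finset.sum_congr rfl fun i _ => Finset.sum_congr rfl fun j _ => ?_
    simp only [Complex.star_def, map_add, _root_.map_mul, Complex.conj_ofReal, Complex.conj_I,
      Complex.mul_re, Complex.add_re, Complex.mul_im, Complex.add_im, Complex.ofReal_re,
      Complex.ofReal_im, Complex.I_re, Complex.I_im, Complex.neg_re, Complex.neg_im]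
    ring
  simp only [Complex.zero_re, key] at hre
  linarith

theorem sq_mul_dotProduct_inv_mulVec_le [DecidableEq m] {Sig : Matrix m m ℝ} {t : ℝ}
    (hSig : IsUnit Sig) (hJ : Jᵀ = -J) (hJJ : J * J = -1)
    (h : (Sig.map (fun a => (a : ℂ)) +
      (Complex.I * Complex.ofReal t) • J.map (fun a => (a : ℂ))).PosSemidef)
    (u : m → ℝ) :
    t ^ 2 * (u ⬝ᵥ Sig⁻¹ *ᵥ u) ≤ (J *ᵥ u) ⬝ᵥ Sig *ᵥ (J *ᵥ u) := by
  have hSig' : IsUnit Sig.det := (isUnit_iff_isUnit_det Sig).mp hSig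
  have h1 := mul_sub_le_of_posSemidef_add_I_smul h (J *ᵥ u) (t • (Sig⁻¹ *ᵥ u))
  have e1 : (J *ᵥ u) ⬝ᵥ J *ᵥ (t • (Sig⁻¹ *ᵥ u)) = t * (u ⬝ᵥ Sig⁻¹ *ᵥ u) := by
    rw [mulVec_smul, dotProduct_smul, mulVec_dotProduct_mulVec, transpose_mul_self_eq_one hJ hJJ,
      one_mulVec, smul_eq_mul]
  have e2 : (t • (Sig⁻¹ *ᵥ u)) ⬝ᵥ Sig *ᵥ (t • (Sig⁻¹ *ᵥ u)) = t ^ 2 * (u ⬝ᵥ Sig⁻¹ *ᵥ u) := by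
    rw [mulVec_smul, mulVec_mulVec, mul_nonsing_inv _ hSig', one_mulVec, smul_dotProduct,
      dotProduct_smul, dotProduct_comm, smul_eq_mul, smul_eq_mul]
    ring
  rw [dotProduct_mulVec_swap hJ (J *ᵥ u), e1, e2] at h1
  linarith

end UncertaintyPrinciple

theorem two_mul_dotProduct_mulVec_le_sq {m : Type*} [Fintype m] [DecidableEq m]
    {Sig : Matrix m m ℝ} (hSig : Sig.PosDef) {c : ℝ} (hc : 0 < c) {y : m → ℝ}
    (h : ∀ z, z ⬝ᵥ Sig⁻¹ *ᵥ z ≤ 2 → z ⬝ᵥ y ≤ c) : 2 * (y ⬝ᵥ Sig *ᵥ y) ≤ c ^ 2 := by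
  set t := y ⬝ᵥ Sig *ᵥ y
  have ht : 0 ≤ t := by simpa only [star_trivial] using hSig.posSemidef.dotProduct_mulVec_nonneg y
  have hden : 0 < c ^ 2 + 2 * t := by positivity
  -- by AM-GM `s Σ y` lies in the ellipsoid, and `s t ≤ c` still forces `2t ≤ c²`
  set s := 4 * c / (c ^ 2 + 2 * t)
  have hzz : (s • (Sig *ᵥ y)) ⬝ᵥ Sig⁻¹ *ᵥ (s • (Sig *ᵥ y)) = s ^ 2 * t := by
    rw [mulVec_smul, mulVec_mulVec, nonsing_inv_mul _ ((isUnit_iff_isUnit_det Sig).mp hSig.isUnit),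
      one_mulVec, smul_dotProduct, dotProduct_smul, dotProduct_comm, smul_eq_mul, smul_eq_mul]
    ring
  have hzy : (s • (Sig *ᵥ y)) ⬝ᵥ y = s * t := by
    rw [smul_dotProduct, dotProduct_comm, smul_eq_mul]
  have hmem : s ^ 2 * t ≤ 2 := by
    rw [div_pow, div_mul_eq_mul_div, div_le_iff₀ (by positivity)]
    nlinarith [sq_nonneg (c ^ 2 - 2 * t)]
  have hle := h _ (hzz ▸ hmem)
  rw [hzy, div_mul_eq_mul_div, div_le_iff₀ hden] at hle
  nlinarith

section SymplecticPolar

open scoped MatrixOrder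

variable {m : Type*} [Fintype m]

theorem transpose_eq_self_of_nonneg {A : Matrix m m ℝ} (hA : 0 ≤ A) : Aᵀ = A := by
  simpa [star_eq_conjTranspose] using hA.isSelfAdjoint.star_eq

theorem isUnit_det_of_mul_self [DecidableEq m] {α : Type*} [CommRing α] {A B : Matrix m m α}
    (hAB : A * A = B) (hB : IsUnit B.det) : IsUnit A.det :=
  isUnit_of_mul_isUnit_left (det_mul A A ▸ hAB ▸ hB)

variable [DecidableEq m]

theorem abs_mulVec_dotProduct_abs_mulVec (K : Matrix m m ℝ) (x : m → ℝ) :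
    (CFC.abs K *ᵥ x) ⬝ᵥ (CFC.abs K *ᵥ x) = (K *ᵥ x) ⬝ᵥ (K *ᵥ x) := by
  rw [mulVec_dotProduct_mulVec, mulVec_dotProduct_mulVec,
    transpose_eq_self_of_nonneg (CFC.abs_nonneg K), CFC.abs_mul_abs, star_eq_conjTranspose,
    conjTranspose_eq_transpose_of_trivial]

theorem isUnit_det_abs {K : Matrix m m ℝ} (hK : IsUnit K.det) : IsUnit (CFC.abs K).det := by
  refine isUnit_det_of_mul_self (CFC.abs_mul_abs K) ?_
  rw [det_mul, star_eq_conjTranspose, conjTranspose_eq_transpose_of_trivial, det_transpose]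
  exact hK.mul hK

theorem inv_abs_mul_mul_inv_abs {K : Matrix m m ℝ} (hK : Kᵀ = -K) (hKu : IsUnit K.det) :
    (CFC.abs K)⁻¹ * K * (CFC.abs K)⁻¹ = -K⁻¹ := by
  set R := CFC.abs K
  have hstar : star K = -K := by
    rw [star_eq_conjTranspose, conjTranspose_eq_transpose_of_trivial, hK]
  have hRR : R * R = -(K * K) := by rw [CFC.abs_mul_abs, hstar, Matrix.neg_mul]
  have hRu : IsUnit R.det := isUnit_det_abs hKu
  have hnormal : IsStarNormal K := ⟨by rw [hstar]; exact (Commute.refl K).neg_left⟩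
  have hRK : R * K = K * R := (CFC.commute_abs_self K).eq
  have hRinvK : R⁻¹ * K = K * R⁻¹ :=
    calc R⁻¹ * K = R⁻¹ * (R * K) * R⁻¹ := by
          rw [hRK, ← Matrix.mul_assoc, mul_nonsing_inv_cancel_right _ _ hRu]
      _ = K * R⁻¹ := by rw [nonsing_inv_mul_cancel_left _ _ hRu]
  have hK : K * (R⁻¹ * K * R⁻¹) = -1 := by
    rw [← Matrix.mul_assoc, ← Matrix.mul_assoc, ← hRinvK, Matrix.mul_assoc R⁻¹, ← neg_neg (K * K),
      ← hRR, Matrix.mul_neg, Matrix.neg_mul, ← Matrix.mul_assoc, nonsing_inv_mul _ hRu,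
      Matrix.one_mul, mul_nonsing_inv _ hRu]
  rw [← nonsing_inv_mul_cancel_left K (R⁻¹ * K * R⁻¹) hKu, hK, Matrix.mul_neg, Matrix.mul_one]

variable {J : Matrix m m ℝ}

theorem mul_inv_abs_mul_symplectic {A : Matrix m m ℝ} (hA : Aᵀ = A) (hAu : IsUnit A.det)
    (hJ : Jᵀ = -J) (hJJ : J * J = -1) :
    A * (CFC.abs (A * J * A))⁻¹ * A * J * (A * (CFC.abs (A * J * A))⁻¹ * A) = J := by
  set K := A * J * A
  have hKT : Kᵀ = -K := by
    simp only [K, transpose_mul, hA, hJ, Matrix.neg_mul, Matrix.mul_neg, Matrix.mul_assoc]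
  have hKu : IsUnit K.det := by
    simp only [K, det_mul]
    exact (hAu.mul (isUnit_det_of_mul_self_eq_neg_one hJJ)).mul hAu
  have hJinv : J⁻¹ = -J := inv_eq_right_inv (by rw [Matrix.mul_neg, hJJ, neg_neg])
  calc A * (CFC.abs K)⁻¹ * A * J * (A * (CFC.abs K)⁻¹ * A)
      = A * ((CFC.abs K)⁻¹ * K * (CFC.abs K)⁻¹) * A := by simp only [K, Matrix.mul_assoc]
    _ = -(A * (A⁻¹ * (J⁻¹ * (A⁻¹ * A)))) := by
      rw [inv_abs_mul_mul_inv_abs hKT hKu, mul_inv_rev, mul_inv_rev]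
      simp only [Matrix.mul_neg, Matrix.neg_mul, Matrix.mul_assoc]
    _ = J := by
      rw [nonsing_inv_mul _ hAu, Matrix.mul_one, mul_nonsing_inv_cancel_left _ _ hAu, hJinv,
        neg_neg]

theorem sqrt_mul_mul_sqrt_eq {P : Matrix m m ℝ} (hP : P.PosDef) (hJ : Jᵀ * J = 1)
    (hPJP : P * J * P = J) : CFC.sqrt P * J * CFC.sqrt P = J := by
  set S := CFC.sqrt P
  have hJJT : J * Jᵀ = 1 := mul_eq_one_comm.mp hJ
  have hPinv : P⁻¹ = Jᵀ * P * J := inv_eq_left_inv (by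
    rw [Matrix.mul_assoc, Matrix.mul_assoc, ← Matrix.mul_assoc P, hPJP, hJ])
  have hSS : S * S = P := CFC.sqrt_mul_sqrt_self P hP.posSemidef.nonneg
  have hSu : IsUnit S.det := isUnit_det_of_mul_self hSS ((isUnit_iff_isUnit_det P).mp hP.isUnit)
  -- `JᵀSJ` is a nonnegative square root of `JᵀPJ = P⁻¹`, hence equals `S⁻¹`
  have hJSJ : Jᵀ * S * J = S⁻¹ := by
    rw [hP.posSemidef.inv_sqrt, hPinv, eq_comm]
    refine CFC.sqrt_unique ?_ ?_
    · calc Jᵀ * S * J * (Jᵀ * S * J) = Jᵀ * S * (J * Jᵀ) * S * J := by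
            simp only [Matrix.mul_assoc]
        _ = Jᵀ * P * J := by rw [hJJT, Matrix.mul_one, ← hSS, Matrix.mul_assoc Jᵀ S S]
    · simpa [conjTranspose_eq_transpose_of_trivial] using
        ((nonneg_iff_posSemidef.mp (CFC.sqrt_nonneg P)).conjTranspose_mul_mul_same J).nonneg
  calc S * J * S = J * (Jᵀ * S * J) * S := by simp only [← Matrix.mul_assoc, hJJT, Matrix.one_mul]
    _ = J := by rw [hJSJ, Matrix.mul_assoc, nonsing_inv_mul _ hSu, Matrix.mul_one]

theorem exists_posDef_symplectic_le {Sig : Matrix m m ℝ} (hSig : Sig.PosDef) (hJ : Jᵀ = -J)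
    (hJJ : J * J = -1) {c : ℝ} (hc : 0 < c)
    (h : ∀ u, c ^ 2 * (u ⬝ᵥ Sig⁻¹ *ᵥ u) ≤ (J *ᵥ u) ⬝ᵥ Sig *ᵥ (J *ᵥ u)) :
    ∃ P : Matrix m m ℝ, P.PosDef ∧ P * J * P = J ∧ ∀ v, c * (v ⬝ᵥ P *ᵥ v) ≤ v ⬝ᵥ Sig *ᵥ v := by
  set A := CFC.sqrt Sig
  have hAA : A * A = Sig := CFC.sqrt_mul_sqrt_self Sig hSig.posSemidef.nonneg
  have hAT : Aᵀ = A := transpose_eq_self_of_nonneg (CFC.sqrt_nonneg Sig)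
  have hAu : IsUnit A.det :=
    isUnit_det_of_mul_self hAA ((isUnit_iff_isUnit_det Sig).mp hSig.isUnit)
  set K := A * J * A
  have hKu : IsUnit K.det := by
    simp only [K, det_mul]
    exact (hAu.mul (isUnit_det_of_mul_self_eq_neg_one hJJ)).mul hAu
  set R := CFC.abs K
  have hR : R.PosDef := (nonneg_iff_posSemidef.mp (CFC.abs_nonneg K)).posDef_iff_isUnit.mpr
    ((isUnit_iff_isUnit_det R).mpr (isUnit_det_abs hKu))
  have hRc : ∀ y, c ^ 2 * (y ⬝ᵥ y) ≤ (R *ᵥ y) ⬝ᵥ (R *ᵥ y) := by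
    intro y
    have hAy : (A *ᵥ y) ⬝ᵥ Sig⁻¹ *ᵥ (A *ᵥ y) = y ⬝ᵥ y := by
      rw [mulVec_mulVec, mulVec_dotProduct_mulVec, hAT, ← hAA, Matrix.mul_inv_rev,
        Matrix.mul_assoc A⁻¹, nonsing_inv_mul _ hAu, Matrix.mul_one, mul_nonsing_inv _ hAu,
        one_mulVec]
    have hKy : (K *ᵥ y) ⬝ᵥ (K *ᵥ y) = (J *ᵥ (A *ᵥ y)) ⬝ᵥ Sig *ᵥ (J *ᵥ (A *ᵥ y)) := by
      rw [← mulVec_mulVec, ← mulVec_mulVec, mulVec_dotProduct_mulVec, hAT, hAA]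
    rw [abs_mulVec_dotProduct_abs_mulVec, hKy, ← hAy]
    exact h _
  refine ⟨A * R⁻¹ * A, ?_, mul_inv_abs_mul_symplectic hAT hAu hJ hJJ, fun v => ?_⟩
  · simpa [conjTranspose_eq_transpose_of_trivial, hAT] using
      hR.inv.conjTranspose_mul_mul_same (mulVec_injective_iff_isUnit.mpr
        ((isUnit_iff_isUnit_det A).mpr hAu))
  · have hv : v ⬝ᵥ (A * R⁻¹ * A) *ᵥ v = (A *ᵥ v) ⬝ᵥ R⁻¹ *ᵥ (A *ᵥ v) := by
      rw [mulVec_mulVec, mulVec_dotProduct_mulVec, hAT, Matrix.mul_assoc]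
    have hAv : (A *ᵥ v) ⬝ᵥ (A *ᵥ v) = v ⬝ᵥ Sig *ᵥ v := by
      rw [mulVec_dotProduct_mulVec, hAT, hAA]
    rw [hv, ← le_inv_mul_iff₀ hc, ← hAv]
    exact dotProduct_inv_mulVec_le ((isUnit_iff_isUnit_det R).mp hR.isUnit) hc hRc _

end SymplecticPolar

end Matrix

open Matrix

theorem Jmat_transpose (n : ℕ) : (Jmat n)ᵀ = -Jmat n := by
  simp [Jmat, fromBlocks_transpose, fromBlocks_neg]

theorem Jmat_mul_self (n : ℕ) : Jmat n * Jmat n = -1 := by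
  rw [Jmat, fromBlocks_multiply, ← fromBlocks_one, fromBlocks_neg]
  simp

section PhaseSpace

open scoped MatrixOrder

variable {n : ℕ}

theorem qf_eq_dotProduct {m : Type*} [Fintype m] [DecidableEq m] (M : Matrix m m ℝ)
    (z : EuclideanSpace ℝ m) : qf M z = z.ofLp ⬝ᵥ M *ᵥ z.ofLp :=
  rfl

theorem symp_eq_dotProduct (z z' : PS n) : symp n z z' = z'.ofLp ⬝ᵥ Jmat n *ᵥ z.ofLp :=
  rfl

theorem sympDual_ellipsoid_subset {ℏ : ℝ} (hℏ : 0 < ℏ)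
    {Sig : Matrix (Fin n ⊕ Fin n) (Fin n ⊕ Fin n) ℝ} (hSig : Sig.PosDef)
    (h : ∀ u, (ℏ / 2) ^ 2 * (u ⬝ᵥ Sig⁻¹ *ᵥ u) ≤ (Jmat n *ᵥ u) ⬝ᵥ Sig *ᵥ (Jmat n *ᵥ u)) :
    sympDual n ℏ {z | qf Sig⁻¹ z ≤ 2} ⊆ {z | qf Sig⁻¹ z ≤ 2} := by
  intro z' hz'
  have hy : 2 * ((-(Jmat n *ᵥ z'.ofLp)) ⬝ᵥ Sig *ᵥ (-(Jmat n *ᵥ z'.ofLp))) ≤ ℏ ^ 2 :=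
    two_mul_dotProduct_mulVec_le_sq hSig hℏ fun z hz => by
      have hσ := hz' (WithLp.toLp 2 z) hz
      rwa [symp_eq_dotProduct, dotProduct_mulVec_swap (Jmat_transpose n), ← dotProduct_neg] at hσ
  rw [mulVec_neg, dotProduct_neg, neg_dotProduct, neg_neg] at hy
  have hz := h z'.ofLp
  show z'.ofLp ⬝ᵥ Sig⁻¹ *ᵥ z'.ofLp ≤ 2
  nlinarith [pow_pos hℏ 2]

theorem exists_isSymplectic_image_closedBall_subset {ℏ : ℝ} (hℏ : 0 < ℏ)
    {Sig : Matrix (Fin n ⊕ Fin n) (Fin n ⊕ Fin n) ℝ} (hSig : Sig.PosDef)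
    (h : ∀ u, (ℏ / 2) ^ 2 * (u ⬝ᵥ Sig⁻¹ *ᵥ u) ≤ (Jmat n *ᵥ u) ⬝ᵥ Sig *ᵥ (Jmat n *ᵥ u)) :
    ∃ S : PS n ≃ₗ[ℝ] PS n, IsSymplectic S ∧
      ⇑S '' closedBall (0 : PS n) (Real.sqrt ℏ) ⊆ {z | qf Sig⁻¹ z ≤ 2} := by
  obtain ⟨P, hP, hPJP, hPSig⟩ :=
    exists_posDef_symplectic_le hSig (Jmat_transpose n) (Jmat_mul_self n) (half_pos hℏ) h
  set S := CFC.sqrt P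
  have hST : Sᵀ = S := transpose_eq_self_of_nonneg (CFC.sqrt_nonneg P)
  have hSS : S * S = P := CFC.sqrt_mul_sqrt_self P hP.posSemidef.nonneg
  have hSu : IsUnit S.det := isUnit_det_of_mul_self hSS ((isUnit_iff_isUnit_det P).mp hP.isUnit)
  have hSJS : S * Jmat n * S = Jmat n :=
    sqrt_mul_mul_sqrt_eq hP (transpose_mul_self_eq_one (Jmat_transpose n) (Jmat_mul_self n)) hPJP
  have hSx : ∀ x, (S *ᵥ x) ⬝ᵥ Sig⁻¹ *ᵥ (S *ᵥ x) ≤ (ℏ / 2)⁻¹ * (x ⬝ᵥ x) :=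
    mulVec_dotProduct_inv_mulVec_le hSig (half_pos hℏ) fun v => by
      rw [hST, mulVec_dotProduct_mulVec, hST, hSS]
      exact hPSig v
  refine ⟨S.toLinearEquiv (EuclideanSpace.basisFun _ ℝ).toBasis hSu, fun z z' => ?_, ?_⟩
  · show (S *ᵥ z'.ofLp) ⬝ᵥ Jmat n *ᵥ (S *ᵥ z.ofLp) = z'.ofLp ⬝ᵥ Jmat n *ᵥ z.ofLp
    rw [mulVec_mulVec, mulVec_dotProduct_mulVec, hST, ← Matrix.mul_assoc, hSJS]
  · rintro _ ⟨x, hx, rfl⟩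
    have hxx : x.ofLp ⬝ᵥ x.ofLp ≤ ℏ := by
      rw [mem_closedBall_zero_iff] at hx
      calc x.ofLp ⬝ᵥ x.ofLp = ‖x‖ ^ 2 := by rw [← real_inner_self_eq_norm_sq]; rfl
        _ ≤ Real.sqrt ℏ ^ 2 := by gcongr
        _ = ℏ := Real.sq_sqrt hℏ.le
    calc (S *ᵥ x.ofLp) ⬝ᵥ Sig⁻¹ *ᵥ (S *ᵥ x.ofLp) ≤ (ℏ / 2)⁻¹ * (x.ofLp ⬝ᵥ x.ofLp) := hSx _
      _ ≤ (ℏ / 2)⁻¹ * ℏ := by gcongr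
      _ = 2 := by field_simp

end PhaseSpace

/-- if `Σ` is a symmetric positive definite `2n×2n` matrix such that
`Σ + (iℏ/2)J` is positive semidefinite (as a complex Hermitian matrix), then the
covariance ellipsoid `Ω = {⟨Σ⁻¹z,z⟩ ≤ 2}` satisfies `Ω^{ℏ,σ} ⊆ Ω`, and consequently `Ω`
is quantum admissible (contains a quantum blob `S(B²ⁿ(√ℏ))`). -/
theorem stmt14 (n : ℕ) (ℏ : ℝ) (hℏ : 0 < ℏ)
    (Sig : Matrix (Fin n ⊕ Fin n) (Fin n ⊕ Fin n) ℝ) (hSig : Sig.PosDef)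
    (hquantum : (Sig.map (fun a => (a : ℂ)) +
        (Complex.I * Complex.ofReal (ℏ / 2)) • (Jmat n).map (fun a => (a : ℂ))).PosSemidef) :
    sympDual n ℏ {z | qf Sig⁻¹ z ≤ 2} ⊆ {z | qf Sig⁻¹ z ≤ 2} ∧
    ∃ S : PS n ≃ₗ[ℝ] PS n, IsSymplectic S ∧
      ⇑S '' closedBall (0 : PS n) (Real.sqrt ℏ) ⊆ {z | qf Sig⁻¹ z ≤ 2} := by
  have hkey := sq_mul_dotProduct_inv_mulVec_le hSig.isUnit (Jmat_transpose n) (Jmat_mul_self n)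
    hquantum
  exact ⟨sympDual_ellipsoid_subset hℏ hSig hkey,
    exists_isSymplectic_image_closedBall_subset hℏ hSig hkey⟩
end
end

section
/- Let (ℓ, ℓ') be a Lagrangian frame in (ℝ^{2n}, σ) and let X_ℓ ⊆ ℓ be a centered ellipsoid carried by ℓ (i.e. X_ℓ = L(B^{2n}(1)) ∩ ℓ for some injective linear map L : ℝⁿ → ℝ^{2n} with range ℓ, equivalently X_ℓ is the image of a Euclidean ball of ℝⁿ under a linear isomorphism onto ℓ). Then there exists a linear symplectic automorphism S of ℝ^{2n} such that the Minkowski sum X_ℓ + (X_ℓ)^ℏ_{ℓ'} equals S(C), where C = {(x, p) ∈ ℝⁿ × ℝⁿ : ‖x‖ ≤ √ℏ and ‖p‖ ≤ √ℏ}. -/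
open MeasureTheory Real Metric
open scoped RealInnerProductSpace Pointwise

noncomputable section

/-- A Lagrangian plane: an `n`-dimensional subspace of `ℝ²ⁿ` on which `σ` vanishes
identically. -/
def IsLagrangian (n : ℕ) (ℓ : Submodule ℝ (PS n)) : Prop :=
  Module.finrank ℝ ℓ = n ∧ ∀ z ∈ ℓ, ∀ z' ∈ ℓ, symp n z z' = 0

/-- A Lagrangian frame: a pair of transversal Lagrangian planes. -/
def IsLagrangianFrame (n : ℕ) (ℓ ℓ' : Submodule ℝ (PS n)) : Prop :=
  IsLagrangian n ℓ ∧ IsLagrangian n ℓ' ∧ ℓ ⊓ ℓ' = ⊥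

/-- The Lagrangian polar dual of `X ⊆ ℓ` with respect to `ℓ'`:
`X^ℏ_{ℓ'} = {z' ∈ ℓ' : ∀ z ∈ X, σ(z, z') ≤ ℏ}`. -/
def lagDual (n : ℕ) (ℏ : ℝ) (ℓ' : Submodule ℝ (PS n)) (X : Set (PS n)) : Set (PS n) :=
  {z' | z' ∈ ℓ' ∧ ∀ z ∈ X, symp n z z' ≤ ℏ}

/-- The position part of a phase-space point. -/
def xpart (n : ℕ) (z : PS n) : En n := WithLp.toLp 2 (fun i => z (Sum.inl i))

/-- The momentum part of a phase-space point. -/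
def ppart (n : ℕ) (z : PS n) : En n := WithLp.toLp 2 (fun i => z (Sum.inr i))

/-- A centered ellipsoid carried by the subspace `ℓ`: the image of a Euclidean ball of
`ℝⁿ` under a linear isomorphism onto `ℓ`. -/
def IsCenteredEllipsoidOn (n : ℕ) (ℓ : Submodule ℝ (PS n)) (X : Set (PS n)) : Prop :=
  ∃ L : En n →ₗ[ℝ] PS n, ∃ r : ℝ, 0 < r ∧ Function.Injective L ∧
    LinearMap.range L = ℓ ∧ X = ⇑L '' Metric.closedBall (0 : En n) r

/-! Write `X_ℓ = L(B(√ℏ))` with `range L = ℓ`. The pairing `z' ↦ (σ(L eᵢ, z'))ᵢ` is injective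
on `ℓ'`, because `σ` vanishes on `ℓ'`, `ℓ + ℓ' = ℝ²ⁿ` and `σ` is nondegenerate; so it identifies
`ℓ'` with `ℝⁿ`. With `N` minus its inverse, `σ(Lu, Nv) = -⟨u, v⟩`, hence `S(x, p) = Lx + Np`
preserves `σ` and is therefore invertible. The polar dual of `L(B(√ℏ))` in `ℓ'` is
`N(B(ℏ/√ℏ)) = N(B(√ℏ))`, so `S(C) = L(B(√ℏ)) + N(B(√ℏ))` is the geometric state. -/

def mkPS (n : ℕ) (u v : En n) : PS n := WithLp.toLp 2 fun k => Sum.elim u v k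

@[simp] lemma xpart_mkPS (n : ℕ) (u v : En n) : xpart n (mkPS n u v) = u := rfl

@[simp] lemma ppart_mkPS (n : ℕ) (u v : En n) : ppart n (mkPS n u v) = v := rfl

lemma PS.ext {n : ℕ} {z z' : PS n} (hx : xpart n z = xpart n z')
    (hp : ppart n z = ppart n z') : z = z' := by
  ext (i | i)
  · exact congrArg (fun v : En n => v i) hx
  · exact congrArg (fun v : En n => v i) hp

def xpartL (n : ℕ) : PS n →ₗ[ℝ] En n where
  toFun := xpart n
  map_add' _ _ := rfl
  map_smul' _ _ := rfl

def ppartL (n : ℕ) : PS n →ₗ[ℝ] En n where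
  toFun := ppart n
  map_add' _ _ := rfl
  map_smul' _ _ := rfl

lemma symp_eq_inner (n : ℕ) (z z' : PS n) :
    symp n z z' = ⟪ppart n z, xpart n z'⟫ - ⟪xpart n z, ppart n z'⟫ := by
  simp [symp, ppart, xpart, Jmat, Matrix.toLpLin_apply, PiLp.inner_apply, Matrix.mulVec,
    Matrix.fromBlocks, dotProduct, Fintype.sum_sum_type, Matrix.one_apply, mul_comm, sub_eq_add_neg]

lemma symp_add_left (n : ℕ) (z₁ z₂ z' : PS n) :
    symp n (z₁ + z₂) z' = symp n z₁ z' + symp n z₂ z' := by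
  simp [symp, inner_add_left]

lemma symp_add_right (n : ℕ) (z z₁' z₂' : PS n) :
    symp n z (z₁' + z₂') = symp n z z₁' + symp n z z₂' := by
  simp [symp, inner_add_right]

lemma symp_neg_right (n : ℕ) (z z' : PS n) : symp n z (-z') = -symp n z z' := by
  simp [symp]

lemma symp_zero_right (n : ℕ) (z : PS n) : symp n z 0 = 0 := by
  simp [symp]

lemma symp_comm (n : ℕ) (z z' : PS n) : symp n z z' = -symp n z' z := by
  rw [symp_eq_inner, symp_eq_inner, real_inner_comm (ppart n z), real_inner_comm (xpart n z)]
  ring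

lemma eq_zero_of_forall_symp_eq_zero {n : ℕ} {z' : PS n} (h : ∀ z, symp n z z' = 0) :
    z' = 0 := by
  have hz := h (mkPS n (-ppart n z') (xpart n z'))
  rw [symp_eq_inner, ppart_mkPS, xpart_mkPS, inner_neg_left, sub_neg_eq_add,
    real_inner_self_eq_norm_sq, real_inner_self_eq_norm_sq] at hz
  have hx : xpart n z' = 0 := by
    rw [← norm_eq_zero]; nlinarith [sq_nonneg ‖xpart n z'‖, sq_nonneg ‖ppart n z'‖]
  have hp : ppart n z' = 0 := by
    rw [← norm_eq_zero]; nlinarith [sq_nonneg ‖xpart n z'‖, sq_nonneg ‖ppart n z'‖]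
  exact PS.ext hx hp

lemma injective_of_preserves_symp {n : ℕ} {f : PS n →ₗ[ℝ] PS n}
    (hf : ∀ z z', symp n (f z) (f z') = symp n z z') : Function.Injective f := by
  refine (injective_iff_map_eq_zero f).2 fun z hz => eq_zero_of_forall_symp_eq_zero fun z' => ?_
  rw [← hf, hz, symp_zero_right]

def frameMap {n : ℕ} (A B : En n →ₗ[ℝ] PS n) : PS n →ₗ[ℝ] PS n :=
  A ∘ₗ xpartL n + B ∘ₗ ppartL n

lemma frameMap_apply {n : ℕ} (A B : En n →ₗ[ℝ] PS n) (z : PS n) :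
    frameMap A B z = A (xpart n z) + B (ppart n z) := rfl

lemma symp_frameMap {n : ℕ} {A B : En n →ₗ[ℝ] PS n}
    (hA : ∀ u u', symp n (A u) (A u') = 0) (hB : ∀ v v', symp n (B v) (B v') = 0)
    (hAB : ∀ u v, symp n (A u) (B v) = -⟪u, v⟫) (z z' : PS n) :
    symp n (frameMap A B z) (frameMap A B z') = symp n z z' := by
  simp only [frameMap_apply, symp_add_left, symp_add_right, hA, hB, hAB]
  rw [symp_comm n (B _), hAB, symp_eq_inner, real_inner_comm (ppart n z)]
  ring

lemma frameMap_image {n : ℕ} (A B : En n →ₗ[ℝ] PS n) (s t : Set (En n)) :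
    frameMap A B '' {z | xpart n z ∈ s ∧ ppart n z ∈ t} = A '' s + B '' t := by
  ext w
  constructor
  · rintro ⟨z, ⟨hx, hp⟩, rfl⟩
    exact Set.add_mem_add ⟨_, hx, rfl⟩ ⟨_, hp, rfl⟩
  · rintro ⟨_, ⟨u, hu, rfl⟩, _, ⟨v, hv, rfl⟩, rfl⟩
    exact ⟨mkPS n u v, ⟨hu, hv⟩, rfl⟩

lemma forall_closedBall_inner_le_iff {E : Type*} [NormedAddCommGroup E] [InnerProductSpace ℝ E]
    {r : ℝ} (hr : 0 < r) (c : ℝ) (w : E) :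
    (∀ u ∈ closedBall (0 : E) r, ⟪u, w⟫ ≤ c) ↔ ‖w‖ ≤ c / r := by
  rw [le_div_iff₀' hr]
  constructor
  · intro h
    rcases eq_or_ne w 0 with rfl | hw
    · simpa using h 0 (by simp [hr.le])
    · have hw' : 0 < ‖w‖ := norm_pos_iff.2 hw
      have := h ((r / ‖w‖) • w) (by simp [norm_smul, abs_of_pos hr, hw'.ne'])
      rwa [real_inner_smul_left, real_inner_self_eq_norm_sq, div_mul_eq_mul_div, sq,
        ← mul_assoc, mul_div_assoc, div_self hw'.ne', mul_one] at this
  · intro h u hu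
    calc ⟪u, w⟫ ≤ ‖u‖ * ‖w‖ := real_inner_le_norm u w
      _ ≤ r * ‖w‖ := by gcongr; exact mem_closedBall_zero_iff.1 hu
      _ ≤ c := h

def sympPairing {n : ℕ} (L : En n →ₗ[ℝ] PS n) : PS n →ₗ[ℝ] En n :=
  LinearMap.adjoint (Matrix.toEuclideanLin (Jmat n) ∘ₗ L)

lemma symp_apply_eq_inner_sympPairing {n : ℕ} (L : En n →ₗ[ℝ] PS n) (u : En n) (z' : PS n) :
    symp n (L u) z' = ⟪u, sympPairing L z'⟫ := by
  rw [sympPairing, LinearMap.adjoint_inner_right]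
  rfl

lemma lagDual_image_closedBall {n : ℕ} (ℏ : ℝ) (ℓ' : Submodule ℝ (PS n))
    (L : En n →ₗ[ℝ] PS n) {r : ℝ} (hr : 0 < r) :
    lagDual n ℏ ℓ' (L '' closedBall 0 r) = {z' | z' ∈ ℓ' ∧ ‖sympPairing L z'‖ ≤ ℏ / r} := by
  ext z'
  simp only [lagDual, Set.forall_mem_image, symp_apply_eq_inner_sympPairing,
    forall_closedBall_inner_le_iff hr]

lemma IsCenteredEllipsoidOn.exists_eq_image_closedBall {n : ℕ} {ℓ : Submodule ℝ (PS n)}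
    {X : Set (PS n)} (hX : IsCenteredEllipsoidOn n ℓ X) {ρ : ℝ} (hρ : 0 < ρ) :
    ∃ L : En n →ₗ[ℝ] PS n, LinearMap.range L = ℓ ∧ X = L '' closedBall 0 ρ := by
  obtain ⟨L, r, hr, -, rfl, rfl⟩ := hX
  refine ⟨(r / ρ) • L, LinearMap.range_smul L _ (div_pos hr hρ).ne', ?_⟩
  have : ⇑((r / ρ) • L) = L ∘ fun u => (r / ρ) • u := funext fun u => (map_smul L _ u).symm
  rw [this, Set.image_comp, Set.image_smul, smul_closedBall _ _ hρ.le, smul_zero, Real.norm_eq_abs,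
    abs_of_pos (div_pos hr hρ), div_mul_cancel₀ _ hρ.ne']

namespace IsLagrangianFrame

variable {n : ℕ} {ℓ ℓ' : Submodule ℝ (PS n)}

lemma sup_eq_top (h : IsLagrangianFrame n ℓ ℓ') : ℓ ⊔ ℓ' = ⊤ := by
  refine Submodule.eq_top_of_disjoint ℓ ℓ' ?_ (disjoint_iff.2 h.2.2)
  simp [h.1.1, h.2.1.1]

lemma eq_zero_of_forall_symp_eq_zero (h : IsLagrangianFrame n ℓ ℓ') {z' : PS n} (hz' : z' ∈ ℓ')
    (hℓ : ∀ z ∈ ℓ, symp n z z' = 0) : z' = 0 := by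
  refine _root_.eq_zero_of_forall_symp_eq_zero fun z => ?_
  obtain ⟨a, ha, b, hb, rfl⟩ := Submodule.mem_sup.1 (h.sup_eq_top ▸ Submodule.mem_top (x := z))
  rw [symp_add_left, hℓ a ha, h.2.1.2 b hb z' hz', add_zero]

def pairingEquiv (h : IsLagrangianFrame n ℓ ℓ') {L : En n →ₗ[ℝ] PS n}
    (hL : LinearMap.range L = ℓ) : ℓ' ≃ₗ[ℝ] En n :=
  LinearMap.linearEquivOfInjective (sympPairing L ∘ₗ ℓ'.subtype)
    (by
      refine (injective_iff_map_eq_zero _).2 fun z' hz' => Subtype.ext <|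
        h.eq_zero_of_forall_symp_eq_zero z'.2 ?_
      intro z hz
      obtain ⟨u, rfl⟩ := hL ▸ hz
      rw [symp_apply_eq_inner_sympPairing]
      exact (congrArg _ hz').trans (inner_zero_right u))
    (by rw [h.2.1.1, finrank_euclideanSpace_fin])

variable (h : IsLagrangianFrame n ℓ ℓ') {L : En n →ₗ[ℝ] PS n} (hL : LinearMap.range L = ℓ)

lemma pairingEquiv_apply (z' : ℓ') : h.pairingEquiv hL z' = sympPairing L z' := rfl

lemma sympPairing_pairingEquiv_symm (v : En n) :
    sympPairing L ((h.pairingEquiv hL).symm v : PS n) = v :=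
  (h.pairingEquiv hL).apply_symm_apply v

def symplecticPartner : En n →ₗ[ℝ] PS n :=
  -(ℓ'.subtype ∘ₗ (h.pairingEquiv hL).symm.toLinearMap)

lemma symplecticPartner_mem (v : En n) : h.symplecticPartner hL v ∈ ℓ' :=
  ℓ'.neg_mem ((h.pairingEquiv hL).symm v).2

lemma symp_symplecticPartner (u v : En n) :
    symp n (L u) (h.symplecticPartner hL v) = -⟪u, v⟫ := by
  simp only [symplecticPartner, LinearMap.neg_apply, LinearMap.comp_apply, symp_neg_right,
    LinearEquiv.coe_toLinearMap, Submodule.subtype_apply, symp_apply_eq_inner_sympPairing,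
    sympPairing_pairingEquiv_symm]

lemma image_symplecticPartner_closedBall (ρ : ℝ) :
    h.symplecticPartner hL '' closedBall 0 ρ = {z' | z' ∈ ℓ' ∧ ‖sympPairing L z'‖ ≤ ρ} := by
  ext z'
  constructor
  · rintro ⟨v, hv, rfl⟩
    refine ⟨h.symplecticPartner_mem hL v, ?_⟩
    simpa [symplecticPartner, sympPairing_pairingEquiv_symm] using hv
  · rintro ⟨hz', hρ⟩
    refine ⟨-h.pairingEquiv hL ⟨z', hz'⟩, by simpa [pairingEquiv_apply] using hρ, ?_⟩
    simp [symplecticPartner]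

lemma symp_frameMap_symplecticPartner (z z' : PS n) :
    symp n (frameMap L (h.symplecticPartner hL) z) (frameMap L (h.symplecticPartner hL) z') =
      symp n z z' := by
  have hLℓ : ∀ u, L u ∈ ℓ := fun u => hL ▸ LinearMap.mem_range_self L u
  exact symp_frameMap (fun u u' => h.1.2 _ (hLℓ u) _ (hLℓ u'))
    (fun v v' => h.2.1.2 _ (h.symplecticPartner_mem hL v) _ (h.symplecticPartner_mem hL v'))
    (h.symp_symplecticPartner hL) z z'

end IsLagrangianFrame

/-- for a Lagrangian frame `(ℓ, ℓ')` and a centered ellipsoid `X_ℓ` carried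
by `ℓ`, the geometric state `X_ℓ + (X_ℓ)^ℏ_{ℓ'}` (Minkowski sum) is the image by some
linear symplectic automorphism `S` of `C = {(x,p) : ‖x‖ ≤ √ℏ, ‖p‖ ≤ √ℏ}`. -/
theorem stmt17 (n : ℕ) (ℏ : ℝ) (hℏ : 0 < ℏ) (ℓ ℓ' : Submodule ℝ (PS n))
    (hframe : IsLagrangianFrame n ℓ ℓ')
    (Xℓ : Set (PS n)) (hXℓ : IsCenteredEllipsoidOn n ℓ Xℓ) :
    ∃ S : PS n ≃ₗ[ℝ] PS n, IsSymplectic S ∧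
      Xℓ + lagDual n ℏ ℓ' Xℓ =
        ⇑S '' {z : PS n | ‖xpart n z‖ ≤ Real.sqrt ℏ ∧ ‖ppart n z‖ ≤ Real.sqrt ℏ} := by
  have hsqrt : 0 < Real.sqrt ℏ := Real.sqrt_pos.2 hℏ
  obtain ⟨L, hL, rfl⟩ := hXℓ.exists_eq_image_closedBall hsqrt
  have hS := hframe.symp_frameMap_symplecticPartner hL
  refine ⟨LinearEquiv.ofInjectiveEndo _ (injective_of_preserves_symp hS), hS, ?_⟩
  rw [lagDual_image_closedBall _ _ _ hsqrt, Real.div_sqrt,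
    ← hframe.image_symplecticPartner_closedBall hL, LinearEquiv.coe_ofInjectiveEndo,
    ← frameMap_image]
  simp only [mem_closedBall_zero_iff]
end
end
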